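/- arXiv:2010.14034 — 2 statements merged into one kernel-verified Lean document; each statement's English description precedes it below -/
import Mathlib

section
/- Let X be a compact Hausdorff space with Lebesgue covering dimension at most n. Then every finite open cover of X admits a finite open refinement 𝒰 that decomposes as a disjoint union 𝒰 = 𝒰_0 ⊔ 𝒰_1 ⊔ ⋯ ⊔ 𝒰_n of subcollections such that for each 0 ≤ i ≤ n, any two distinct members V_1, V_2 of 𝒰_i have disjoint closures. -/
/-- If every finite open cover of the compact Hausdorff space `X` has a finite open
refinement decomposable into `n+1` subcollections of pairwise disjoint sets
(i.e. `dim X ≤ n`), then every finite open cover has a strongly `n`-decomposable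
refinement: one where the members of each subcollection have pairwise disjoint closures. -/
theorem stmt2 {X : Type*} [TopologicalSpace X] [CompactSpace X] [T2Space X] (n : ℕ)
    (hdim : ∀ (m : ℕ) (U : Fin m → Set X), (∀ i, IsOpen (U i)) → (⋃ i, U i = Set.univ) →
      ∃ (k : ℕ) (V : Fin k → Set X) (c : Fin k → Fin (n + 1)),
        (∀ j, IsOpen (V j)) ∧ (⋃ j, V j = Set.univ) ∧ (∀ j, ∃ i, V j ⊆ U i) ∧
        (∀ j₁ j₂, j₁ ≠ j₂ → c j₁ = c j₂ → V j₁ ∩ V j₂ = ∅)) :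
    ∀ (m : ℕ) (U : Fin m → Set X), (∀ i, IsOpen (U i)) → (⋃ i, U i = Set.univ) →
      ∃ (k : ℕ) (V : Fin k → Set X) (c : Fin k → Fin (n + 1)),
        (∀ j, IsOpen (V j)) ∧ (⋃ j, V j = Set.univ) ∧ (∀ j, ∃ i, V j ⊆ U i) ∧
        (∀ j₁ j₂, j₁ ≠ j₂ → c j₁ = c j₂ → closure (V j₁) ∩ closure (V j₂) = ∅) := by
  intro m U hUo hUc
  obtain ⟨k, V, c, hVo, hVc, href, hdisj⟩ := hdim m U hUo hUc
  obtain ⟨W, hWc, hWo, hWcl⟩ := exists_subset_iUnion_closure_subset (s := Set.univ)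
    isClosed_univ hVo (fun x _ => Set.finite_univ.subset (Set.subset_univ _)) (hVc ▸ le_rfl)
  refine ⟨k, W, c, hWo, Set.univ_subset_iff.mp hWc, fun j => (href j).imp
    fun i hi => (subset_closure.trans (hWcl j)).trans hi, fun j₁ j₂ hne hc => ?_⟩
  have := hdisj j₁ j₂ hne hc
  exact Set.eq_empty_of_subset_empty (this ▸ Set.inter_subset_inter (hWcl j₁) (hWcl j₂))
end

section
/- Let Y be a compact metric space and let 𝒜 ⊆ C(Y) be the countable dense subalgebra constructed from a countable dense set and rational-radius bump functions (closed under multiplication by the chosen bump functions ρ_{(K,U)}). Then for every non-negative f ∈ C(Y) and every δ > 0 there exists f_0 ∈ 𝒜 with ‖f − f_0‖_∞ < δ and supp(f_0) ⊆ supp(f), where supp(g) = {y ∈ Y : g(y) ≠ 0}. -/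
/-!
Approximate `f` by some `g ∈ A` to within `δ`, and multiply `g` by a bump `ρ` that equals `1`
on the compact set `{δ ≤ f}` and vanishes off the open support of `f`. Then `ρ * g ∈ A` has
support inside that of `f`. Where `ρ = 1` the error is that of `g`; elsewhere `f < δ`, and
`|f - ρ g| ≤ (1 - ρ) f + ρ |f - g|` is a convex combination of two quantities below `δ`.
-/

theorem abs_sub_mul_le {a b r : ℝ} (ha : 0 ≤ a) (hr₀ : 0 ≤ r) (hr₁ : r ≤ 1) :
    |a - r * b| ≤ (1 - r) * a + r * |a - b| :=
  calc |a - r * b| = |(1 - r) * a + r * (a - b)| := by ring_nf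
    _ ≤ |(1 - r) * a| + |r * (a - b)| := abs_add_le _ _
    _ = (1 - r) * a + r * |a - b| := by
      rw [abs_mul, abs_mul, abs_of_nonneg (sub_nonneg.2 hr₁), abs_of_nonneg ha,
        abs_of_nonneg hr₀]

theorem abs_sub_mul_lt {a b r ε : ℝ} (ha : 0 ≤ a) (hr₀ : 0 ≤ r) (hr₁ : r ≤ 1)
    (hab : |a - b| < ε) (hr : ε ≤ a → r = 1) : |a - r * b| < ε := by
  by_cases haε : ε ≤ a
  · rwa [hr haε, one_mul]
  · have hεa : 0 < ε - a := sub_pos.2 (not_le.1 haε)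
    calc |a - r * b| ≤ (1 - r) * a + r * |a - b| := abs_sub_mul_le ha hr₀ hr₁
      _ < ε := by
        nlinarith [mul_nonneg (sub_nonneg.2 hr₁) hεa.le, mul_le_mul_of_nonneg_left hab.le hr₀,
          mul_pos hεa (sub_pos.2 hab)]

theorem ContinuousMap.norm_sub_mul_lt {X : Type*} [TopologicalSpace X] [CompactSpace X]
    {f g ρ : C(X, ℝ)} {ε : ℝ} (hf : ∀ x, 0 ≤ f x) (hρ : ∀ x, 0 ≤ ρ x ∧ ρ x ≤ 1)
    (hρf : ∀ x, ε ≤ f x → ρ x = 1) (hfg : ‖f - g‖ < ε) : ‖f - ρ * g‖ < ε := by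
  rw [ContinuousMap.norm_lt_iff _ ((norm_nonneg _).trans_lt hfg)]
  intro x
  have hfgx : |f x - g x| < ε := ((f - g).norm_coe_le_norm x).trans_lt hfg
  exact abs_sub_mul_lt (hf x) (hρ x).1 (hρ x).2 hfgx (hρf x)

theorem stmt4_general {Y : Type*} [MetricSpace Y] [CompactSpace Y]
    (A : Set C(Y, ℝ))
    (hdense : Dense A)
    (hbump : ∀ K U : Set Y, IsCompact K → IsOpen U → K ⊆ U →
      ∃ ρ : C(Y, ℝ), (∀ y, 0 ≤ ρ y ∧ ρ y ≤ 1) ∧ (∀ y ∈ K, ρ y = 1) ∧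
        (∀ y ∉ U, ρ y = 0) ∧ ∀ f ∈ A, ρ * f ∈ A) :
    ∀ f : C(Y, ℝ), (∀ y, 0 ≤ f y) → ∀ δ : ℝ, 0 < δ →
      ∃ f₀ ∈ A, ‖f - f₀‖ < δ ∧ {y | f₀ y ≠ 0} ⊆ {y | f y ≠ 0} := by
  intro f hf δ hδ
  obtain ⟨ρ, hρ, hρK, hρU, hρA⟩ := hbump {y | δ ≤ f y} {y | f y ≠ 0}
    (isClosed_le continuous_const f.continuous).isCompact
    (isOpen_ne_fun f.continuous continuous_const) fun y hy => (hδ.trans_le hy).ne'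
  obtain ⟨g, hgA, hfg⟩ := hdense.exists_dist_lt f hδ
  refine ⟨ρ * g, hρA g hgA, ContinuousMap.norm_sub_mul_lt hf hρ hρK ?_, ?_⟩
  · rwa [← dist_eq_norm]
  · intro y hy
    by_contra hfy
    exact hy (by rw [ContinuousMap.mul_apply, hρU y hfy, zero_mul])

/-- If `A` is a dense subset of `C(Y, ℝ)` closed under multiplication by bump functions
(one for each compact-open pair), then every non-negative continuous function can be
approximated by elements of `A` without enlarging the support. -/
theorem stmt4 {Y : Type*} [MetricSpace Y] [CompactSpace Y]
    (A : Set C(Y, ℝ)) (hA : Countable A)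
    (hsub : ∀ f ∈ A, ∀ g ∈ A, f + g ∈ A ∧ f * g ∈ A)
    (hdense : Dense A)
    (hbump : ∀ K U : Set Y, IsCompact K → IsOpen U → K ⊆ U →
      ∃ ρ : C(Y, ℝ), (∀ y, 0 ≤ ρ y ∧ ρ y ≤ 1) ∧ (∀ y ∈ K, ρ y = 1) ∧
        (∀ y ∉ U, ρ y = 0) ∧ ∀ f ∈ A, ρ * f ∈ A) :
    ∀ f : C(Y, ℝ), (∀ y, 0 ≤ f y) → ∀ δ : ℝ, 0 < δ →
      ∃ f₀ ∈ A, ‖f - f₀‖ < δ ∧ {y | f₀ y ≠ 0} ⊆ {y | f y ≠ 0} :=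
  stmt4_general A hdense hbump
end
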